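/- arXiv:2103.07729 — 3 statements merged into one kernel-verified Lean document; each statement's English description precedes it below -/
import Mathlib

section
/- If f(z) = ∑_{m=0}^∞ a_m z^m is analytic on the open unit disc with |f(z)| < 1 for all |z| < 1, then ∑_{m=0}^∞ |a_m| r^m ≤ 1 for all 0 ≤ r ≤ 1/3. -/
/-!
For `m ≥ 1`, averaging `f` over the rotations `z ↦ ωʲ z` by the `m`-th roots of unity keeps only
the coefficients `a (k * m)`, so `w ↦ ∑ₖ a (k * m) wᵏ` is again a map of the unit disc into itself
(evaluate at an `m`-th root of `w`). The Schwarz–Pick bound `‖g' 0‖ ≤ 1 - ‖g 0‖²`, which is Schwarz's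
lemma after composing with the disc automorphism moving `g 0` to `0`, then gives Wiener's inequality
`‖a m‖ ≤ 1 - ‖a 0‖²`. Hence for `r ≤ 1/3`, with `x = ‖a 0‖`,
`∑ ‖a m‖ rᵐ ≤ x + (1 - x²) r / (1 - r) ≤ x + (1 - x²) / 2 = 1 - (1 - x)² / 2 ≤ 1`.
-/

open Complex ComplexConjugate Metric Set Finset
open scoped BigOperators

noncomputable def discMobius (w v : ℂ) : ℂ := (v - w) / (1 - conj w * v)

section DiscMobius

variable {w v : ℂ}

lemma one_sub_conj_mul_ne_zero (hw : ‖w‖ < 1) (hv : ‖v‖ < 1) : 1 - conj w * v ≠ 0 := by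
  refine sub_ne_zero.mpr fun h => ?_
  have : ‖conj w * v‖ < 1 := by
    rw [norm_mul, Complex.norm_conj]
    exact mul_lt_one_of_nonneg_of_lt_one_left (norm_nonneg _) hw hv.le
  rw [← h, norm_one] at this
  exact lt_irrefl _ this

lemma normSq_one_sub_conj_mul_sub_normSq_sub (w v : ℂ) :
    normSq (1 - conj w * v) - normSq (v - w) = (1 - normSq w) * (1 - normSq v) := by
  simp only [normSq_apply, sub_re, sub_im, mul_re, mul_im, one_re, one_im, conj_re, conj_im]
  ring

lemma norm_discMobius_lt_one (hw : ‖w‖ < 1) (hv : ‖v‖ < 1) : ‖discMobius w v‖ < 1 := by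
  rw [discMobius, norm_div, div_lt_one (norm_pos_iff.mpr (one_sub_conj_mul_ne_zero hw hv))]
  refine lt_of_pow_lt_pow_left₀ 2 (norm_nonneg _) ?_
  have hw' : 0 < 1 - normSq w := by rw [normSq_eq_norm_sq]; nlinarith [norm_nonneg w]
  have hv' : 0 < 1 - normSq v := by rw [normSq_eq_norm_sq]; nlinarith [norm_nonneg v]
  rw [← normSq_eq_norm_sq, ← normSq_eq_norm_sq]
  nlinarith [normSq_one_sub_conj_mul_sub_normSq_sub w v, mul_pos hw' hv']

@[simp] lemma discMobius_self (w : ℂ) : discMobius w w = 0 := by simp [discMobius]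

lemma differentiableAt_discMobius (hw : ‖w‖ < 1) (hv : ‖v‖ < 1) :
    DifferentiableAt ℂ (discMobius w) v :=
  (differentiableAt_id.sub_const w).div ((differentiableAt_id.const_mul _).const_sub 1)
    (one_sub_conj_mul_ne_zero hw hv)

lemma hasDerivAt_discMobius_self (hw : ‖w‖ < 1) :
    HasDerivAt (discMobius w) (1 - conj w * w)⁻¹ w := by
  have hden := one_sub_conj_mul_ne_zero hw hw
  refine (((hasDerivAt_id' w).sub_const w).div
    (((hasDerivAt_id' w).const_mul (conj w)).const_sub 1) hden).congr_deriv ?_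
  field_simp
  ring

end DiscMobius

theorem norm_deriv_zero_le_one_sub_sq {F : ℂ → ℂ} (hd : DifferentiableOn ℂ F (ball 0 1))
    (hF : MapsTo F (ball 0 1) (ball 0 1)) : ‖deriv F 0‖ ≤ 1 - ‖F 0‖ ^ 2 := by
  set w := F 0
  have hw : ‖w‖ < 1 := mem_ball_zero_iff.mp (hF (mem_ball_self one_pos))
  have hmaps : MapsTo (discMobius w ∘ F) (ball 0 1) (closedBall ((discMobius w ∘ F) 0) 1) :=
    fun z hz => by
      simpa [w] using (norm_discMobius_lt_one hw (mem_ball_zero_iff.mp (hF hz))).le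
  have hdiff : DifferentiableOn ℂ (discMobius w ∘ F) (ball 0 1) := fun z hz =>
    (differentiableAt_discMobius hw (mem_ball_zero_iff.mp (hF hz))).comp_differentiableWithinAt
      z (hd z hz)
  have hderiv : HasDerivAt (discMobius w ∘ F) ((1 - conj w * w)⁻¹ * deriv F 0) 0 :=
    (hasDerivAt_discMobius_self hw).comp 0
      (hd.differentiableAt (ball_mem_nhds _ one_pos)).hasDerivAt
  have hschwarz := Complex.norm_deriv_le_div_of_mapsTo_ball hdiff hmaps one_pos
  have hpos : 0 < 1 - ‖w‖ ^ 2 := by nlinarith [norm_nonneg w]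
  rwa [hderiv.deriv, conj_mul', norm_mul, norm_inv, ← ofReal_pow, ← ofReal_one, ← ofReal_sub,
    norm_real, Real.norm_of_nonneg hpos.le, div_one, inv_mul_le_iff₀ hpos, mul_one] at hschwarz

lemma hasFPowerSeriesOnBall_ofScalars_of_hasSum {c : ℕ → ℂ} {g : ℂ → ℂ}
    (h : ∀ z : ℂ, ‖z‖ < 1 → HasSum (fun n => c n * z ^ n) (g z)) :
    HasFPowerSeriesOnBall g (FormalMultilinearSeries.ofScalars ℂ c) 0 1 := by
  refine ⟨ENNReal.le_of_forall_nnreal_lt fun r hr => ?_, one_pos, fun {y} hy => ?_⟩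
  · refine FormalMultilinearSeries.le_radius_of_summable _ ?_
    have hr1 : ‖((r : ℝ) : ℂ)‖ < 1 := by simpa using hr
    refine ((h _ hr1).summable.norm).congr fun n => ?_
    simp
  · rw [← ENNReal.coe_one, eball_coe, NNReal.coe_one, mem_ball_zero_iff] at hy
    simpa [FormalMultilinearSeries.ofScalars_apply_eq, mul_comm] using h y hy

theorem norm_coeff_one_le_one_sub_sq {c : ℕ → ℂ}
    (h : ∀ z : ℂ, ‖z‖ < 1 → ∃ s, HasSum (fun n => c n * z ^ n) s ∧ ‖s‖ < 1) :
    ‖c 1‖ ≤ 1 - ‖c 0‖ ^ 2 := by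
  set g : ℂ → ℂ := fun z => ∑' n, c n * z ^ n
  have hg : ∀ z : ℂ, ‖z‖ < 1 → HasSum (fun n => c n * z ^ n) (g z) ∧ ‖g z‖ < 1 := by
    intro z hz
    obtain ⟨s, hs, hs1⟩ := h z hz
    rw [show g z = s from hs.tsum_eq]
    exact ⟨hs, hs1⟩
  have hps := hasFPowerSeriesOnBall_ofScalars_of_hasSum fun z hz => (hg z hz).1
  have hg0 : g 0 = c 0 := by simpa using (hps.coeff_zero fun _ => 0).symm
  have hg1 : deriv g 0 = c 1 := by simp [hps.hasFPowerSeriesAt.deriv]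
  have hmaps : MapsTo g (ball 0 1) (ball 0 1) := fun z hz => by
    simpa using (hg z (mem_ball_zero_iff.mp hz)).2
  have hdiff : DifferentiableOn ℂ g (ball 0 1) := by
    simpa [← ENNReal.coe_one, eball_coe] using hps.differentiableOn
  simpa [hg0, hg1] using norm_deriv_zero_le_one_sub_sq hdiff hmaps

theorem IsPrimitiveRoot.sum_range_pow_pow_eq_ite {K : Type*} [Field K] {ω : K} {m : ℕ}
    (hω : IsPrimitiveRoot ω m) (n : ℕ) :
    ∑ j ∈ range m, (ω ^ n) ^ j = if m ∣ n then (m : K) else 0 := by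
  split_ifs with hmn
  · simp [(hω.pow_eq_one_iff_dvd n).mpr hmn]
  · have hne : ω ^ n ≠ 1 := fun h => hmn ((hω.pow_eq_one_iff_dvd n).mp h)
    rw [geom_sum_eq hne, ← pow_mul, mul_comm, pow_mul, hω.pow_eq_one, one_pow, sub_self,
      zero_div]

lemma exists_pow_eq_of_norm_lt_one {w : ℂ} (hw : ‖w‖ < 1) {m : ℕ} (hm : m ≠ 0) :
    ∃ z : ℂ, ‖z‖ < 1 ∧ z ^ m = w := by
  obtain ⟨z, rfl⟩ := IsAlgClosed.exists_pow_nat_eq w (Nat.pos_of_ne_zero hm)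
  exact ⟨z, (pow_lt_one_iff_of_nonneg (norm_nonneg z) hm).mp (by rwa [← norm_pow]), rfl⟩

theorem IsPrimitiveRoot.hasSum_coeff_mul_pow_mul {K : Type*} [Field K] [TopologicalSpace K]
    [IsTopologicalRing K] {a : ℕ → K} {f : K → K} {m : ℕ} {ω z : K}
    (hω : IsPrimitiveRoot ω m) (hm : m ≠ 0)
    (hsum : ∀ j, HasSum (fun n => a n * (ω ^ j * z) ^ n) (f (ω ^ j * z))) :
    HasSum (fun k => a (k * m) * (z ^ m) ^ k) ((∑ j ∈ range m, f (ω ^ j * z)) / m) := by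
  have hm' : (m : K) ≠ 0 := by
    have : NeZero m := ⟨hm⟩
    exact hω.neZero'.out
  have hfilter : ∀ n, (∑ j ∈ range m, a n * (ω ^ j * z) ^ n) / m =
      if m ∣ n then a n * z ^ n else 0 := by
    intro n
    have hterm : ∀ j, a n * (ω ^ j * z) ^ n = a n * z ^ n * (ω ^ n) ^ j := fun j => by ring
    rw [sum_congr rfl fun j _ => hterm j, ← mul_sum, hω.sum_range_pow_pow_eq_ite]
    split_ifs <;> simp [hm']
  have havg := (hasSum_sum (s := range m) fun j _ => hsum j).div_const (m : K)
  simp only [hfilter] at havg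
  rw [← (mul_left_injective₀ hm).hasSum_iff fun n hn => if_neg fun ⟨k, hk⟩ => hn ⟨k, by
    rw [hk, mul_comm]⟩] at havg
  refine havg.congr_fun fun k => ?_
  simp [← pow_mul, mul_comm m k]

theorem norm_coeff_le_one_sub_sq {a : ℕ → ℂ} {f : ℂ → ℂ}
    (hsum : ∀ z : ℂ, ‖z‖ < 1 → HasSum (fun m : ℕ => a m * z ^ m) (f z))
    (hbound : ∀ z : ℂ, ‖z‖ < 1 → ‖f z‖ < 1) {m : ℕ} (hm : m ≠ 0) :
    ‖a m‖ ≤ 1 - ‖a 0‖ ^ 2 := by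
  obtain ⟨ω, hω⟩ : ∃ ω : ℂ, IsPrimitiveRoot ω m := ⟨_, isPrimitiveRoot_exp m hm⟩
  simpa using norm_coeff_one_le_one_sub_sq (c := fun k => a (k * m)) fun w hw => by
    obtain ⟨z, hz, rfl⟩ := exists_pow_eq_of_norm_lt_one hw hm
    have hrot : ∀ j : ℕ, ‖ω ^ j * z‖ < 1 := by simpa [hω.norm'_eq_one hm] using hz
    refine ⟨_, hω.hasSum_coeff_mul_pow_mul hm fun j => hsum _ (hrot j), ?_⟩
    have hmean : (∑ j ∈ range m, f (ω ^ j * z)) / m = 𝔼 j ∈ range m, f (ω ^ j * z) := by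
      rw [expect_eq_sum_div_card, card_range]
    rw [hmean]
    exact (RCLike.norm_expect_le (K := ℂ)).trans_lt (expect_lt (fun j _ => (hbound _ (hrot j)).le)
      ⟨0, mem_range.mpr (Nat.pos_of_ne_zero hm), hbound _ (hrot 0)⟩)

theorem tsum_mul_pow_le_of_le {b : ℕ → ℝ} {B r : ℝ} (hb : ∀ m, 0 ≤ b m) (hB : ∀ m, b (m + 1) ≤ B)
    (hr0 : 0 ≤ r) (hr1 : r < 1) : ∑' m, b m * r ^ m ≤ b 0 + B * (r / (1 - r)) := by
  have hgeom : HasSum (fun m => B * (r * r ^ m)) (B * (r / (1 - r))) := by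
    simpa only [div_eq_mul_inv] using ((hasSum_geometric_of_lt_one hr0 hr1).mul_left r).mul_left B
  have hle : ∀ m, b (m + 1) * r ^ (m + 1) ≤ B * (r * r ^ m) := fun m => by
    rw [pow_succ']
    exact mul_le_mul_of_nonneg_right (hB m) (by positivity)
  have htail : Summable fun m => b (m + 1) * r ^ (m + 1) :=
    hgeom.summable.of_nonneg_of_le (fun m => mul_nonneg (hb _) (by positivity)) hle
  have hsummable : Summable fun m => b m * r ^ m := (summable_nat_add_iff 1).mp htail
  rw [hsummable.tsum_eq_zero_add, pow_zero, mul_one]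
  linarith [hasSum_le hle htail.hasSum hgeom]

/-- Classical Bohr inequality: if `f(z) = ∑ aₘ zᵐ` on the unit disc and `|f(z)| < 1`
there, then `∑ |aₘ| rᵐ ≤ 1` for `0 ≤ r ≤ 1/3`. -/
theorem bohr_inequality (a : ℕ → ℂ) (f : ℂ → ℂ)
    (hsum : ∀ z : ℂ, ‖z‖ < 1 → HasSum (fun m : ℕ => a m * z ^ m) (f z))
    (hbound : ∀ z : ℂ, ‖z‖ < 1 → ‖f z‖ < 1) :
    ∀ r : ℝ, 0 ≤ r → r ≤ 1 / 3 → ∑' m : ℕ, ‖a m‖ * r ^ m ≤ 1 := by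
  intro r hr0 hr13
  have hcoeff : ∀ m, ‖a (m + 1)‖ ≤ 1 - ‖a 0‖ ^ 2 := fun m =>
    norm_coeff_le_one_sub_sq hsum hbound m.succ_ne_zero
  have hB : 0 ≤ 1 - ‖a 0‖ ^ 2 := (norm_nonneg _).trans (hcoeff 0)
  have hr : r / (1 - r) ≤ 1 / 2 := by
    rw [div_le_iff₀ (by linarith)]
    linarith
  calc ∑' m, ‖a m‖ * r ^ m ≤ ‖a 0‖ + (1 - ‖a 0‖ ^ 2) * (r / (1 - r)) :=
        tsum_mul_pow_le_of_le (fun m => norm_nonneg _) hcoeff hr0 (by linarith)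
    _ ≤ ‖a 0‖ + (1 - ‖a 0‖ ^ 2) * (1 / 2) := by gcongr
    _ ≤ 1 := by nlinarith [sq_nonneg (1 - ‖a 0‖)]
end

section
/- Let (a_m), (b_m) be complex sequences with a_1 = 1, |a_m| ≤ m for all m ≥ 1, and |a_m + λ b_m| ≤ 1 for all m ≥ 1 with some λ ∈ ℂ of modulus 1. Then ∑_{m=1}^∞ |a_m| r^m + ∑_{m=1}^∞ |b_m| r^m ≤ 2r/(1-r)^2 + r/(1-r), and this is ≤ 1 for 0 ≤ r ≤ (5-√17)/4. -/
/-! Since `|λ| = 1`, `|b_m| ≤ |a_m + λ b_m| + |a_m| ≤ m + 1`, so the two series are dominated by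
`∑ (m + 1) r^(m+1) = r / (1 - r)^2` and `∑ (m + 2) r^(m+1) = r / (1 - r)^2 + r / (1 - r)`.
Clearing denominators, the total is at most `1` iff `2r² - 5r + 1 ≥ 0`, whose smaller root is
`(5 - √17) / 4`. -/

theorem hasSum_succ_mul_geometric_succ {𝕜 : Type*} [NormedField 𝕜] [CompleteSpace 𝕜] {r : 𝕜}
    (hr : ‖r‖ < 1) :
    HasSum (fun n : ℕ ↦ ((n : 𝕜) + 1) * r ^ (n + 1)) (r / (1 - r) ^ 2) := by
  have h := (hasSum_nat_add_iff' (f := fun n : ℕ ↦ (n : 𝕜) * r ^ n) 1).mpr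
    (hasSum_coe_mul_geometric_of_norm_lt_one hr)
  simpa using h

theorem hasSum_geometric_succ {𝕜 : Type*} [NormedField 𝕜] [CompleteSpace 𝕜] {r : 𝕜}
    (hr : ‖r‖ < 1) :
    HasSum (fun n : ℕ ↦ r ^ (n + 1)) (r / (1 - r)) := by
  simpa [pow_succ', div_eq_mul_inv] using (hasSum_geometric_of_norm_lt_one hr).mul_left r

theorem norm_le_norm_add_mul_add_norm_of_norm_eq_one {𝕜 : Type*} [NormedDivisionRing 𝕜]
    {a b lam : 𝕜} (hlam : ‖lam‖ = 1) : ‖b‖ ≤ ‖a + lam * b‖ + ‖a‖ := by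
  calc ‖b‖ = ‖(a + lam * b) - a‖ := by rw [add_sub_cancel_left, norm_mul, hlam, one_mul]
    _ ≤ ‖a + lam * b‖ + ‖a‖ := norm_sub_le _ _

theorem tsum_norm_mul_pow_succ_le_of_norm_le_linear {E : Type*} [SeminormedAddCommGroup E]
    {c : ℕ → E} {A B r : ℝ} (hr₀ : 0 ≤ r) (hr₁ : r < 1)
    (hc : ∀ m : ℕ, 1 ≤ m → ‖c m‖ ≤ A * m + B) :
    ∑' m : ℕ, ‖c (m + 1)‖ * r ^ (m + 1) ≤ A * (r / (1 - r) ^ 2) + B * (r / (1 - r)) := by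
  have hr : ‖r‖ < 1 := by rwa [Real.norm_of_nonneg hr₀]
  have hmajorant : HasSum (fun m : ℕ ↦ (A * ((m : ℝ) + 1) + B) * r ^ (m + 1))
      (A * (r / (1 - r) ^ 2) + B * (r / (1 - r))) := by
    convert! ((hasSum_succ_mul_geometric_succ hr).mul_left A).add
      ((hasSum_geometric_succ hr).mul_left B) using 2 with m
    ring
  have hle : ∀ m : ℕ, ‖c (m + 1)‖ * r ^ (m + 1) ≤ (A * ((m : ℝ) + 1) + B) * r ^ (m + 1) := by
    intro m
    gcongr
    exact_mod_cast hc (m + 1) m.succ_pos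
  have hnonneg : ∀ m : ℕ, 0 ≤ ‖c (m + 1)‖ * r ^ (m + 1) := fun m ↦ by positivity
  exact hasSum_le hle (hmajorant.summable.of_nonneg_of_le hnonneg hle).hasSum hmajorant

theorem two_mul_div_one_sub_sq_add_div_one_sub_le_one {r : ℝ} (hr₀ : 0 ≤ r)
    (hr : r ≤ (5 - √17) / 4) : 2 * r / (1 - r) ^ 2 + r / (1 - r) ≤ 1 := by
  have hsqrt : √17 ^ 2 = 17 := Real.sq_sqrt (by norm_num)
  have hr₁ : 0 < 1 - r := by nlinarith [Real.sqrt_nonneg 17]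
  rw [div_add_div _ _ (by positivity) hr₁.ne', div_le_one (by positivity)]
  -- `2r² - 5r + 1 = (5 - √17 - 4r)(5 + √17 - 4r) / 8`
  nlinarith [mul_nonneg (mul_nonneg (by linarith : 0 ≤ 5 - √17 - 4 * r)
    (by nlinarith [Real.sqrt_nonneg 17] : 0 ≤ 5 + √17 - 4 * r)) hr₁.le]

theorem bohr_sum_bound_convex_direction_general (a b : ℕ → ℂ) (lam : ℂ)
    (hlam : ‖lam‖ = 1)
    (ha : ∀ m : ℕ, 1 ≤ m → ‖a m‖ ≤ (m : ℝ))
    (hab : ∀ m : ℕ, 1 ≤ m → ‖a m + lam * b m‖ ≤ 1) :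
    ∀ r : ℝ, r ∈ Set.Ico (0 : ℝ) 1 →
      (∑' m : ℕ, ‖a (m + 1)‖ * r ^ (m + 1) + ∑' m : ℕ, ‖b (m + 1)‖ * r ^ (m + 1) ≤
          2 * r / (1 - r) ^ 2 + r / (1 - r)) ∧
      (r ≤ (5 - Real.sqrt 17) / 4 →
        ∑' m : ℕ, ‖a (m + 1)‖ * r ^ (m + 1) + ∑' m : ℕ, ‖b (m + 1)‖ * r ^ (m + 1) ≤ 1) := by
  rintro r ⟨hr₀, hr₁⟩
  have hb : ∀ m : ℕ, 1 ≤ m → ‖b m‖ ≤ 1 * m + 1 := fun m hm ↦ by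
    linarith [norm_le_norm_add_mul_add_norm_of_norm_eq_one (a := a m) (b := b m) hlam,
      hab m hm, ha m hm]
  have hsum_a := tsum_norm_mul_pow_succ_le_of_norm_le_linear (A := 1) (B := 0) hr₀ hr₁
    (fun m hm ↦ by simpa using ha m hm)
  have hsum_b := tsum_norm_mul_pow_succ_le_of_norm_le_linear hr₀ hr₁ hb
  have hbound : ∑' m : ℕ, ‖a (m + 1)‖ * r ^ (m + 1) + ∑' m : ℕ, ‖b (m + 1)‖ * r ^ (m + 1) ≤
      2 * r / (1 - r) ^ 2 + r / (1 - r) := by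
    linarith [show 2 * r / (1 - r) ^ 2 = 2 * (r / (1 - r) ^ 2) by ring]
  exact ⟨hbound, fun hr ↦ hbound.trans (two_mul_div_one_sub_sq_add_div_one_sub_le_one hr₀ hr)⟩

/-- Bohr-type estimate for functions with `h + e^{iθ} g` convex:
from `a₁ = 1`, `|aₘ| ≤ m` and `|aₘ + λ bₘ| ≤ 1` (with `|λ| = 1`) follows the series bound. -/
theorem bohr_sum_bound_convex_direction (a b : ℕ → ℂ) (lam : ℂ)
    (hlam : ‖lam‖ = 1) (ha1 : a 1 = 1)
    (ha : ∀ m : ℕ, 1 ≤ m → ‖a m‖ ≤ (m : ℝ))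
    (hab : ∀ m : ℕ, 1 ≤ m → ‖a m + lam * b m‖ ≤ 1) :
    ∀ r : ℝ, r ∈ Set.Ico (0 : ℝ) 1 →
      (∑' m : ℕ, ‖a (m + 1)‖ * r ^ (m + 1) + ∑' m : ℕ, ‖b (m + 1)‖ * r ^ (m + 1) ≤
          2 * r / (1 - r) ^ 2 + r / (1 - r)) ∧
      (r ≤ (5 - Real.sqrt 17) / 4 →
        ∑' m : ℕ, ‖a (m + 1)‖ * r ^ (m + 1) + ∑' m : ℕ, ‖b (m + 1)‖ * r ^ (m + 1) ≤ 1) :=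
  bohr_sum_bound_convex_direction_general a b lam hlam ha hab
end

section
/- Let (a_m)_{m≥1}, (b_m)_{m≥2} be complex sequences with |a_m| ≤ (m+1)(2m+1)/6 for m ≥ 1 and |b_m| ≤ (m-1)(2m-1)/6 for m ≥ 2. Then ∑_{m=1}^∞ |a_m| r^m + ∑_{m=2}^∞ |b_m| r^m ≤ ∑_{m=1}^∞ ((2m^2+1)/3) r^m = 2r(1+r)/(3(1-r)^3) + r/(3(1-r)) for r ∈ (0,1), and this sum is ≤ 1 whenever 4r^3 - 9r^2 + 12r - 3 ≤ 0. -/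
/-!
The Sheil-Small bounds for `a_m` and `b_m` add up to exactly `(2m² + 1) / 3` (with `b_1 = 0`),
so the Bohr sum is dominated termwise by the majorant `∑ (2m² + 1) / 3 · r^m`. Writing
`(2m² + 1) / 3` in the binomial basis `C(m+1, 2), C(m, 1), C(m-1, 0)` evaluates the majorant
in closed form as `(3r + r³) / (3(1 - r)³)`, which is at most `1` exactly when
`4r³ - 9r² + 12r - 3 ≤ 0`.
-/

theorem hasSum_sheilSmall_majorant {𝕜 : Type*} [NormedField 𝕜] [CompleteSpace 𝕜] [CharZero 𝕜]
    {r : 𝕜} (hr : ‖r‖ < 1) :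
    HasSum (fun m : ℕ => ((2 * ((m : 𝕜) + 1) ^ 2 + 1) / 3) * r ^ (m + 1))
      (2 * r * (1 + r) / (3 * (1 - r) ^ 3) + r / (3 * (1 - r))) := by
  have h1r : 1 - r ≠ 0 := by
    intro h
    simp [(sub_eq_zero.mp h).symm] at hr
  have h2 := hasSum_choose_mul_geometric_of_norm_lt_one 2 hr
  have h1 := hasSum_choose_mul_geometric_of_norm_lt_one 1 hr
  have h0 := hasSum_choose_mul_geometric_of_norm_lt_one 0 hr
  have hterm : (fun m : ℕ => ((2 * ((m : 𝕜) + 1) ^ 2 + 1) / 3) * r ^ (m + 1)) = fun m =>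
      r * (4 / 3 * ((m + 2).choose 2 * r ^ m) - 2 / 3 * ((m + 1).choose 1 * r ^ m) +
        1 / 3 * ((m + 0).choose 0 * r ^ m)) := by
    funext m
    simp only [Nat.cast_choose_two, Nat.choose_one_right, Nat.choose_zero_right]
    push_cast
    ring
  have hsum : 2 * r * (1 + r) / (3 * (1 - r) ^ 3) + r / (3 * (1 - r)) =
      r * (4 / 3 * (1 / (1 - r) ^ (2 + 1)) - 2 / 3 * (1 / (1 - r) ^ (1 + 1)) +
        1 / 3 * (1 / (1 - r) ^ (0 + 1))) := by
    field_simp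
    ring
  rw [hterm, hsum]
  exact (((h2.mul_left (4 / 3)).sub (h1.mul_left (2 / 3))).add (h0.mul_left (1 / 3))).mul_left r

theorem tsum_norm_mul_pow_add_le_sheilSmall_majorant {E : Type*} [SeminormedAddCommGroup E]
    (a b : ℕ → E)
    (ha : ∀ m : ℕ, 1 ≤ m → ‖a m‖ ≤ ((m : ℝ) + 1) * (2 * m + 1) / 6)
    (hb : ∀ m : ℕ, 2 ≤ m → ‖b m‖ ≤ ((m : ℝ) - 1) * (2 * m - 1) / 6) {r : ℝ} (hr0 : 0 ≤ r)
    (hr1 : r < 1) :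
    ∑' m : ℕ, ‖a (m + 1)‖ * r ^ (m + 1) + ∑' m : ℕ, ‖b (m + 2)‖ * r ^ (m + 2) ≤
      ∑' m : ℕ, ((2 * ((m : ℝ) + 1) ^ 2 + 1) / 3) * r ^ (m + 1) := by
  set A : ℕ → ℝ := fun m =>
    (((m + 1 : ℕ) : ℝ) + 1) * (2 * ((m + 1 : ℕ) : ℝ) + 1) / 6 * r ^ (m + 1)
  set B : ℕ → ℝ := fun m =>
    (((m + 1 : ℕ) : ℝ) - 1) * (2 * ((m + 1 : ℕ) : ℝ) - 1) / 6 * r ^ (m + 1)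
  set M : ℕ → ℝ := fun m => ((2 * ((m : ℝ) + 1) ^ 2 + 1) / 3) * r ^ (m + 1)
  have hM : Summable M :=
    (hasSum_sheilSmall_majorant (by rwa [Real.norm_eq_abs, abs_of_nonneg hr0])).summable
  have hAB : ∀ m, A m + B m = M m := fun m => by simp only [A, B, M]; push_cast; ring
  have hA0 : ∀ m, 0 ≤ A m := fun m => by simp only [A]; positivity
  have hB0 : ∀ m, 0 ≤ B m := fun m => by simp only [B]; push_cast; ring_nf; positivity
  have hA : Summable A := .of_nonneg_of_le hA0 (fun m => by linarith [hAB m, hB0 m]) hM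
  have hB : Summable B := .of_nonneg_of_le hB0 (fun m => by linarith [hAB m, hA0 m]) hM
  have ha' : ∀ m, ‖a (m + 1)‖ * r ^ (m + 1) ≤ A m := fun m =>
    mul_le_mul_of_nonneg_right (ha (m + 1) m.succ_pos) (pow_nonneg hr0 _)
  have hb' : ∀ m, ‖b (m + 2)‖ * r ^ (m + 2) ≤ B (m + 1) := fun m =>
    mul_le_mul_of_nonneg_right (hb (m + 2) (by omega)) (pow_nonneg hr0 _)
  have hB_zero : B 0 = 0 := by simp [B]
  have tsum_le : ∀ {f g : ℕ → ℝ}, (∀ m, 0 ≤ f m) → (∀ m, f m ≤ g m) → Summable g →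
      ∑' m, f m ≤ ∑' m, g m := fun hf hfg hg =>
    (Summable.of_nonneg_of_le hf hfg hg).tsum_le_tsum hfg hg
  calc ∑' m, ‖a (m + 1)‖ * r ^ (m + 1) + ∑' m, ‖b (m + 2)‖ * r ^ (m + 2)
      ≤ ∑' m, A m + ∑' m, B (m + 1) :=
        add_le_add (tsum_le (fun _ => by positivity) ha' hA)
          (tsum_le (fun _ => by positivity) hb' ((summable_nat_add_iff 1).mpr hB))
    _ = ∑' m, A m + ∑' m, B m := by rw [hB.tsum_eq_zero_add, hB_zero, zero_add]
    _ = ∑' m, M m := by rw [← hA.tsum_add hB]; simp only [hAB]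

theorem sheilSmall_majorant_le_one_iff {r : ℝ} (hr1 : r < 1) :
    2 * r * (1 + r) / (3 * (1 - r) ^ 3) + r / (3 * (1 - r)) ≤ 1 ↔
      4 * r ^ 3 - 9 * r ^ 2 + 12 * r - 3 ≤ 0 := by
  have h1r : 0 < 1 - r := by linarith
  have : 2 * r * (1 + r) / (3 * (1 - r) ^ 3) + r / (3 * (1 - r)) =
      (3 * r + r ^ 3) / (3 * (1 - r) ^ 3) := by
    field_simp
    ring
  rw [this, div_le_one (by positivity)]
  constructor <;> intro h <;> nlinarith

/-- Bohr-type estimate under the Sheil-Small coefficient bounds for harmonic maps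
convex in one direction. -/
theorem bohr_sum_bound_sheilSmall (a b : ℕ → ℂ)
    (ha : ∀ m : ℕ, 1 ≤ m → ‖a m‖ ≤ ((m : ℝ) + 1) * (2 * m + 1) / 6)
    (hb : ∀ m : ℕ, 2 ≤ m → ‖b m‖ ≤ ((m : ℝ) - 1) * (2 * m - 1) / 6) :
    ∀ r : ℝ, r ∈ Set.Ioo (0 : ℝ) 1 →
      (∑' m : ℕ, ‖a (m + 1)‖ * r ^ (m + 1) + ∑' m : ℕ, ‖b (m + 2)‖ * r ^ (m + 2) ≤
          ∑' m : ℕ, ((2 * ((m : ℝ) + 1) ^ 2 + 1) / 3) * r ^ (m + 1)) ∧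
      (∑' m : ℕ, ((2 * ((m : ℝ) + 1) ^ 2 + 1) / 3) * r ^ (m + 1) =
          2 * r * (1 + r) / (3 * (1 - r) ^ 3) + r / (3 * (1 - r))) ∧
      (4 * r ^ 3 - 9 * r ^ 2 + 12 * r - 3 ≤ 0 →
        ∑' m : ℕ, ‖a (m + 1)‖ * r ^ (m + 1) + ∑' m : ℕ, ‖b (m + 2)‖ * r ^ (m + 2) ≤ 1) := by
  rintro r ⟨hr0, hr1⟩
  have hsum := (hasSum_sheilSmall_majorant (r := r)
    (by rwa [Real.norm_eq_abs, abs_of_pos hr0])).tsum_eq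
  have hle := tsum_norm_mul_pow_add_le_sheilSmall_majorant a b ha hb hr0.le hr1
  refine ⟨hle, hsum, fun hcubic => ?_⟩
  rw [hsum] at hle
  exact hle.trans ((sheilSmall_majorant_le_one_iff hr1).mpr hcubic)
end
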